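/- arXiv:2403.19209 — 2 statements merged into one kernel-verified Lean document; each statement's English description precedes it below -/
import Mathlib

section
/- Let $1\le s<2$, $p>s$ with $p>1$, let $l$ be slowly varying at infinity, and let $r>\max\Big\{2,\,p,\,\frac{p/s-1}{1/s-1/2},\,\frac{p/s-1}{p/2-1/2},\,\frac{p/s-1}{1/2}\Big\}$. Let $Z$ be a nonnegative random variable on a probability space with $\mathbb{E}\big[Z^{\min\{2,p\}}\big]<\infty$. Then $\sum_{n=1}^{\infty}n^{r/2+p/s-2-1/s}\,l(n)\int_{n^{1/s}}^{\infty}x^{-r}\,\big(\mathbb{E}\big[\min(Z,x)^{2}\big]\big)^{r/2}\,dx<\infty$. -/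
/-!
A measurable slowly varying `l` grows slower than every power (Potter's bound, obtained from the
uniform convergence theorem for `log ∘ l ∘ exp`). Interpolating `min(Z, x)² ≤ Z^q x^(2-q)` with
`q = min 2 p` bounds the integrand by `E[Z^q]^(r/2) x^(-qr/2)`, so the `n`-th term is
`O(n^(r/2 + p/s - 2 - 1/s + (1 - qr/2)/s + ε))`, and the condition on `r` makes this exponent
smaller than `-1`.
-/

open MeasureTheory Filter
open Set Asymptotics Topology

theorem exists_subset_Icc_volume_ge_eventually_abs_lt {F : ℕ → ℝ → ℝ}
    (hF : ∀ n, Measurable (F n)) (h : ∀ t, Tendsto (F · t) atTop (𝓝 0))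
    (a b : ℝ) {δ ε : ℝ} (hδ : 0 < δ) (hε : 0 < ε) :
    ∃ S ⊆ Icc a b, MeasurableSet S ∧ ENNReal.ofReal (b - a - δ) ≤ volume S ∧
      ∀ᶠ n in atTop, ∀ t ∈ S, |F n t| < ε := by
  obtain ⟨T, -, hT, hTδ, hunif⟩ := tendstoUniformlyOn_of_ae_tendsto
    (μ := volume) (fun n => (hF n).stronglyMeasurable) stronglyMeasurable_const measurableSet_Icc
    measure_Icc_lt_top.ne (ae_of_all _ fun t _ => h t) hδ
  refine ⟨Icc a b \ T, sdiff_subset, measurableSet_Icc.diff hT, ?_, ?_⟩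
  · calc ENNReal.ofReal (b - a - δ) = ENNReal.ofReal (b - a) - ENNReal.ofReal δ :=
          ENNReal.ofReal_sub _ hδ.le
      _ ≤ volume (Icc a b) - volume T := by rw [Real.volume_Icc]; exact tsub_le_tsub_left hTδ _
      _ ≤ volume (Icc a b \ T) := le_measure_sdiff
  · filter_upwards [Metric.tendstoUniformlyOn_iff.mp hunif ε hε] with n hn t ht
    simpa [Real.dist_eq, abs_sub_comm] using hn t ht

theorem Measurable.tendstoUniformlyOn_add_sub_of_tendsto {f : ℝ → ℝ} (hf : Measurable f)
    (h : ∀ t, Tendsto (fun u => f (u + t) - f u) atTop (𝓝 0)) :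
    TendstoUniformlyOn (fun u t => f (u + t) - f u) 0 atTop (Icc 0 1) := by
  rw [Metric.tendstoUniformlyOn_iff]
  intro ε hε
  by_contra hcon
  simp only [Pi.zero_apply, dist_zero_left, Real.norm_eq_abs, eventually_atTop, not_exists,
    not_forall, not_lt] at hcon
  choose x hx τ hτ hbig using hcon
  have hx : Tendsto (fun n : ℕ => x n) atTop atTop :=
    tendsto_atTop_mono (fun n => hx n) tendsto_natCast_atTop_atTop
  have hxτ : Tendsto (fun n : ℕ => x n + τ n) atTop atTop :=
    tendsto_atTop_mono (fun n => le_add_of_nonneg_right (hτ n).1) hx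
  have hmeas : ∀ y : ℝ, Measurable fun t => f (y + t) - f y :=
    fun y => (hf.comp (measurable_const_add y)).sub_const _
  obtain ⟨S, hS, hSm, hSvol, hSev⟩ := exists_subset_Icc_volume_ge_eventually_abs_lt
    (fun n => hmeas (x n)) (fun t => (h t).comp hx) 0 3 (δ := 1 / 4) (by norm_num)
    (half_pos hε)
  obtain ⟨S', hS', hS'm, hS'vol, hS'ev⟩ := exists_subset_Icc_volume_ge_eventually_abs_lt
    (fun n => hmeas (x n + τ n)) (fun t => (h t).comp hxτ) 0 3 (δ := 1 / 4) (by norm_num)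
    (half_pos hε)
  obtain ⟨n, hn, hn'⟩ := (hSev.and hS'ev).exists
  -- Steinhaus: `S` meets the translate `S' + τ n`, since both lie in `[0, 4]` and are too large.
  have hshift : MeasurableSet ((· + -τ n) ⁻¹' S') := hS'm.preimage (measurable_sub_const _)
  obtain ⟨t, htS, htS'⟩ : (S ∩ (· + -τ n) ⁻¹' S').Nonempty := by
    refine nonempty_inter_of_measure_lt_add volume hshift (u := Icc 0 4)
      (hS.trans (Icc_subset_Icc le_rfl (by norm_num))) ?_ ?_
    · intro z hz
      have := hS' hz
      have := hτ n
      simp only [mem_Icc] at *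
      constructor <;> linarith
    · rw [measure_preimage_add_right, Real.volume_Icc]
      calc ENNReal.ofReal (4 - 0)
          < ENNReal.ofReal (3 - 0 - 1 / 4) + ENNReal.ofReal (3 - 0 - 1 / 4) := by
            rw [← ENNReal.ofReal_add (by norm_num) (by norm_num)]
            exact (ENNReal.ofReal_lt_ofReal_iff (by norm_num)).2 (by norm_num)
        _ ≤ volume S + volume S' := add_le_add hSvol hS'vol
  have h1 := hn t htS
  have h2 := hn' (t + -τ n) htS'
  rw [show x n + τ n + (t + -τ n) = x n + t by ring] at h2
  have := abs_sub_le (f (x n + τ n)) (f (x n + t)) (f (x n))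
  rw [abs_sub_comm (f (x n + τ n)) (f (x n + t))] at this
  linarith [hbig n]

theorem le_add_mul_of_forall_Icc_le {f : ℝ → ℝ} {U ε : ℝ}
    (h : ∀ u, U ≤ u → ∀ t ∈ Icc (0 : ℝ) 1, f (u + t) ≤ f u + ε) {u : ℝ} (hu : U ≤ u) :
    f u ≤ f U + ε * (u - U + 1) := by
  have hε : 0 ≤ ε := by simpa using h U le_rfl 0 (by simp)
  have key : ∀ n : ℕ, ∀ u, U ≤ u → u ≤ U + n → f u ≤ f U + ε * n := by
    intro n
    induction n with
    | zero => intro u hu hu'; rw [le_antisymm (by simpa using hu') hu]; simp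
    | succ n ih =>
      intro u hu hu'
      push_cast at hu' ⊢
      rcases le_or_gt u (U + 1) with hu1 | hu1
      · have := h U le_rfl (u - U) ⟨by linarith, by linarith⟩
        rw [add_sub_cancel] at this
        nlinarith [n.cast_nonneg (α := ℝ)]
      · have := h (u - 1) (by linarith) 1 ⟨zero_le_one, le_rfl⟩
        rw [sub_add_cancel] at this
        linarith [ih (u - 1) (by linarith) (by linarith)]
  calc f u ≤ f U + ε * ⌈u - U⌉₊ := key _ u hu (by linarith [Nat.le_ceil (u - U)])
    _ ≤ f U + ε * (u - U + 1) := by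
      gcongr
      exact (Nat.ceil_lt_add_one (by linarith)).le

def SlowlyVarying (l : ℝ → ℝ) : Prop :=
  ∀ c : ℝ, 0 < c → Tendsto (fun x => l (c * x) / l x) atTop (𝓝 1)

theorem SlowlyVarying.isBigO_rpow {l : ℝ → ℝ} (hslow : SlowlyVarying l) (hl : Measurable l)
    (hpos : ∀ x, 0 < x → 0 < l x) {ε : ℝ} (hε : 0 < ε) : l =O[atTop] fun y => y ^ ε := by
  set f : ℝ → ℝ := fun u => Real.log (l (Real.exp u))
  have hf : ∀ t, Tendsto (fun u => f (u + t) - f u) atTop (𝓝 0) := by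
    intro t
    have := ((Real.continuousAt_log one_ne_zero).tendsto.comp
      ((hslow _ (Real.exp_pos t)).comp Real.tendsto_exp_atTop))
    rw [Real.log_one] at this
    refine this.congr fun u => ?_
    simp only [f, Function.comp_apply, Real.exp_add, mul_comm (Real.exp u)]
    exact Real.log_div (hpos _ (by positivity)).ne' (hpos _ (Real.exp_pos u)).ne'
  obtain ⟨U, hU⟩ := eventually_atTop.mp <| Metric.tendstoUniformlyOn_iff.mp
    ((hl.comp Real.measurable_exp).log.tendstoUniformlyOn_add_sub_of_tendsto hf) ε hε
  have hstep : ∀ u, U ≤ u → ∀ t ∈ Icc (0 : ℝ) 1, f (u + t) ≤ f u + ε := by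
    intro u hu t ht
    have := hU u hu t ht
    simp only [Pi.zero_apply, dist_zero_left, Real.norm_eq_abs, Function.comp_apply] at this
    linarith [le_abs_self (f (u + t) - f u)]
  refine IsBigO.of_bound (Real.exp (f U + ε * (1 - U))) ?_
  filter_upwards [eventually_ge_atTop (Real.exp U), eventually_gt_atTop 0] with y hyU hy
  have hlog : U ≤ Real.log y := (Real.le_log_iff_exp_le hy).2 hyU
  rw [Real.norm_of_nonneg (hpos y hy).le, Real.norm_of_nonneg (Real.rpow_nonneg hy.le _),
    Real.rpow_def_of_pos hy, ← Real.exp_add, ← Real.exp_log (hpos y hy)]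
  have := le_add_mul_of_forall_Icc_le hstep hlog
  simp only [f, Real.exp_log hy] at this
  exact Real.exp_le_exp.2 (by linarith)

theorem integral_min_sq_le_mul_rpow {Ω : Type*} [MeasurableSpace Ω] {μ : Measure Ω}
    {Z : Ω → ℝ} (hZ : ∀ ω, 0 ≤ Z ω) {q : ℝ} (hq0 : 0 ≤ q) (hq2 : q ≤ 2)
    (hint : Integrable (fun ω => Z ω ^ q) μ) {x : ℝ} (hx : 0 ≤ x) :
    ∫ ω, min (Z ω) x ^ 2 ∂μ ≤ (∫ ω, Z ω ^ q ∂μ) * x ^ (2 - q) := by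
  have hle : ∀ ω, min (Z ω) x ^ 2 ≤ Z ω ^ q * x ^ (2 - q) := by
    intro ω
    have hm : 0 ≤ min (Z ω) x := le_min (hZ ω) hx
    calc min (Z ω) x ^ 2 = min (Z ω) x ^ q * min (Z ω) x ^ (2 - q) := by
          rw [← Real.rpow_add_of_nonneg hm hq0 (by linarith), add_sub_cancel,
            Real.rpow_two]
      _ ≤ Z ω ^ q * x ^ (2 - q) :=
          mul_le_mul (Real.rpow_le_rpow hm (min_le_left _ _) hq0)
            (Real.rpow_le_rpow hm (min_le_right _ _) (by linarith))
            (Real.rpow_nonneg hm _) (Real.rpow_nonneg (hZ ω) _)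
  calc ∫ ω, min (Z ω) x ^ 2 ∂μ ≤ ∫ ω, Z ω ^ q * x ^ (2 - q) ∂μ :=
        integral_mono_of_nonneg (ae_of_all _ fun ω => sq_nonneg _) (hint.mul_const _)
          (ae_of_all _ hle)
    _ = (∫ ω, Z ω ^ q ∂μ) * x ^ (2 - q) := integral_mul_const _ _

theorem setIntegral_Ioi_le_of_le_rpow {φ : ℝ → ℝ} {a K e : ℝ} (ha : 0 < a) (he : e < -1)
    (hφ0 : ∀ x ∈ Ioi a, 0 ≤ φ x) (hφ : ∀ x ∈ Ioi a, φ x ≤ K * x ^ e) :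
    ∫ x in Ioi a, φ x ≤ K * (-a ^ (e + 1) / (e + 1)) := by
  calc ∫ x in Ioi a, φ x ≤ ∫ x in Ioi a, K * x ^ e :=
        integral_mono_of_nonneg ((ae_restrict_iff' measurableSet_Ioi).2 (ae_of_all _ hφ0))
          ((integrableOn_Ioi_rpow_of_lt he ha).const_mul K)
          ((ae_restrict_iff' measurableSet_Ioi).2 (ae_of_all _ hφ))
    _ = K * (-a ^ (e + 1) / (e + 1)) := by
        rw [integral_const_mul, integral_Ioi_rpow_of_lt he ha]

section TruncatedMoment

variable {Ω : Type*} [MeasurableSpace Ω] {μ : Measure Ω} {Z : Ω → ℝ} {q r : ℝ}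

theorem rpow_neg_mul_integral_min_sq_rpow_le (hZ : ∀ ω, 0 ≤ Z ω) (hq0 : 0 ≤ q) (hq2 : q ≤ 2)
    (hr : 0 ≤ r) (hint : Integrable (fun ω => Z ω ^ q) μ) {x : ℝ} (hx : 0 < x) :
    x ^ (-r) * (∫ ω, min (Z ω) x ^ 2 ∂μ) ^ (r / 2) ≤
      (∫ ω, Z ω ^ q ∂μ) ^ (r / 2) * x ^ (-(q * r / 2)) := by
  have hK : 0 ≤ ∫ ω, Z ω ^ q ∂μ := integral_nonneg fun ω => Real.rpow_nonneg (hZ ω) _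
  calc x ^ (-r) * (∫ ω, min (Z ω) x ^ 2 ∂μ) ^ (r / 2)
      ≤ x ^ (-r) * ((∫ ω, Z ω ^ q ∂μ) * x ^ (2 - q)) ^ (r / 2) :=
        mul_le_mul_of_nonneg_left (Real.rpow_le_rpow (integral_nonneg fun ω => sq_nonneg _)
          (integral_min_sq_le_mul_rpow hZ hq0 hq2 hint hx.le) (by linarith))
          (Real.rpow_nonneg hx.le _)
    _ = (∫ ω, Z ω ^ q ∂μ) ^ (r / 2) * x ^ (-(q * r / 2)) := by
        rw [Real.mul_rpow hK (Real.rpow_nonneg hx.le _), ← Real.rpow_mul hx.le, mul_left_comm,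
          ← Real.rpow_add hx]
        ring_nf

theorem isBigO_setIntegral_Ioi_rpow_neg_mul_integral_min_sq_rpow (hZ : ∀ ω, 0 ≤ Z ω)
    (hq0 : 0 ≤ q) (hq2 : q ≤ 2) (hr : 0 ≤ r) (hqr : 2 < q * r)
    (hint : Integrable (fun ω => Z ω ^ q) μ) :
    (fun a => ∫ x in Ioi a, x ^ (-r) * (∫ ω, min (Z ω) x ^ 2 ∂μ) ^ (r / 2)) =O[atTop]
      fun a => a ^ (1 - q * r / 2) := by
  have he : -(q * r / 2) < -1 := by linarith
  refine IsBigO.of_bound ((∫ ω, Z ω ^ q ∂μ) ^ (r / 2) / (q * r / 2 - 1)) ?_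
  filter_upwards [eventually_gt_atTop 0] with a ha
  have hnonneg : ∀ x ∈ Ioi a, 0 ≤ x ^ (-r) * (∫ ω, min (Z ω) x ^ 2 ∂μ) ^ (r / 2) :=
    fun x hx => mul_nonneg (Real.rpow_nonneg (ha.trans hx).le _)
      (Real.rpow_nonneg (integral_nonneg fun ω => sq_nonneg _) _)
  rw [Real.norm_of_nonneg (setIntegral_nonneg measurableSet_Ioi hnonneg),
    Real.norm_of_nonneg (Real.rpow_nonneg ha.le _)]
  convert setIntegral_Ioi_le_of_le_rpow ha he hnonneg
    fun x hx => rpow_neg_mul_integral_min_sq_rpow_le hZ hq0 hq2 hr hint (ha.trans hx) using 1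
  rw [show -(q * r / 2) + 1 = 1 - q * r / 2 by ring, ← neg_div_neg_eq, neg_sub]
  ring

end TruncatedMoment

theorem rosenthal_exponent_lt_neg_one {s p r : ℝ} (hs0 : 0 < s) (hs2 : s < 2) (hsp : s < p)
    (hr2 : 2 < r) (hr : (p / s - 1) / (1 / s - 1 / 2) < r) :
    r / 2 + p / s - 2 - 1 / s + (1 - min 2 p * r / 2) / s < -1 := by
  have key : r / 2 + p / s - 2 - 1 / s + (1 - min 2 p * r / 2) / s + 1
      = ((s - min 2 p) * r / 2 + p - s) / s := by field_simp; ring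
  suffices (s - min 2 p) * r / 2 + p - s < 0 by
    linarith [div_neg_of_neg_of_pos this hs0]
  rcases le_total 2 p with hp | hp
  · have hhalf : 0 < 1 / s - 1 / 2 := by
      linarith [one_div_lt_one_div_of_lt hs0 hs2]
    rw [min_eq_left hp]
    rw [div_lt_iff₀ hhalf] at hr
    have := mul_lt_mul_of_pos_right hr hs0
    field_simp at this
    linarith
  · rw [min_eq_right hp]
    nlinarith

theorem second_moment_rosenthal_term_bound_general
    {Ω : Type*} [MeasurableSpace Ω] (μ : Measure Ω)
    (Z : Ω → ℝ) (hZnonneg : ∀ ω, 0 ≤ Z ω)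
    (s p r : ℝ) (hs1 : 1 ≤ s) (hs2 : s < 2) (hsp : s < p) (hp1 : 1 < p)
    (hr : max (max 2 p)
        (max ((p / s - 1) / (1 / s - 1 / 2))
          (max ((p / s - 1) / (p / 2 - 1 / 2)) ((p / s - 1) / (1 / 2)))) < r)
    (l : ℝ → ℝ) (hlmeas : Measurable l) (hlpos : ∀ x, 0 ≤ x → 0 < l x)
    (hlslow : ∀ c : ℝ, 0 < c → Tendsto (fun x => l (c * x) / l x) atTop (nhds 1))
    (hmom : Integrable (fun ω => Z ω ^ min 2 p) μ) :
    Summable (fun n : ℕ =>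
      ((n + 1 : ℝ) ^ (r / 2 + p / s - 2 - 1 / s)) * l (n + 1) *
        ∫ x in Set.Ioi ((n + 1 : ℝ) ^ (1 / s)),
          x ^ (-r) * (∫ ω, (min (Z ω) x) ^ 2 ∂μ) ^ (r / 2)) := by
  have hs0 : 0 < s := by linarith
  have hr2 : 2 < r := (le_max_left _ _).trans_lt ((le_max_left _ _).trans_lt hr)
  have hE := rosenthal_exponent_lt_neg_one hs0 hs2 hsp hr2
    ((le_max_left _ _).trans_lt ((le_max_right _ _).trans_lt hr))
  set c := r / 2 + p / s - 2 - 1 / s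
  set d := (1 - min 2 p * r / 2) / s
  obtain ⟨ε, hε, hεE⟩ : ∃ ε, 0 < ε ∧ c + ε + d < -1 :=
    ⟨(-1 - (c + d)) / 2, by linarith, by linarith⟩
  have hqr : 2 < min 2 p * r := by
    rcases min_choice 2 p with h | h <;> rw [h] <;> nlinarith
  have hI := (isBigO_setIntegral_Ioi_rpow_neg_mul_integral_min_sq_rpow hZnonneg
    (by positivity) (min_le_left 2 p) (by linarith) hqr hmom).comp_tendsto
    (tendsto_rpow_atTop (one_div_pos.2 hs0))
  have hl := SlowlyVarying.isBigO_rpow hlslow hlmeas (fun x hx => hlpos x hx.le) hε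
  have hterm : (fun y : ℝ => y ^ c * l y * ∫ x in Ioi (y ^ (1 / s)),
      x ^ (-r) * (∫ ω, min (Z ω) x ^ 2 ∂μ) ^ (r / 2)) =O[atTop] fun y => y ^ (c + ε + d) := by
    refine ((isBigO_refl _ _).mul hl).mul hI |>.trans_eventuallyEq ?_
    filter_upwards [eventually_gt_atTop 0] with y hy
    rw [Function.comp_apply, ← Real.rpow_mul hy.le, Real.rpow_add hy, Real.rpow_add hy,
      one_div_mul_eq_div]
  refine summable_of_isBigO_nat ?_ (hterm.comp_tendsto
    (tendsto_atTop_add_const_right _ 1 tendsto_natCast_atTop_atTop))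
  exact_mod_cast (summable_nat_add_iff 1).2 (Real.summable_nat_rpow.2 hεE)

/-- **Bound for the second-moment Rosenthal term I₂₂ in the proof of Theorem 3.1.**
If `1 ≤ s < 2`, `p > s`, `p > 1`, `l` is slowly varying at infinity,
`r > max{2, p, (p/s-1)/(1/s-1/2), (p/s-1)/(p/2-1/2), (p/s-1)/(1/2)}`, and `Z ≥ 0`
satisfies `E[Z^{min{2,p}}] < ∞`, then
`∑ n^{r/2+p/s-2-1/s} l(n) ∫_{n^{1/s}}^∞ x^{-r} (E[min(Z, x)²])^{r/2} dx < ∞`. -/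
theorem second_moment_rosenthal_term_bound
    {Ω : Type*} [MeasurableSpace Ω] (μ : Measure Ω) [IsProbabilityMeasure μ]
    (Z : Ω → ℝ) (hZmeas : Measurable Z) (hZnonneg : ∀ ω, 0 ≤ Z ω)
    (s p r : ℝ) (hs1 : 1 ≤ s) (hs2 : s < 2) (hsp : s < p) (hp1 : 1 < p)
    (hr : max (max 2 p)
        (max ((p / s - 1) / (1 / s - 1 / 2))
          (max ((p / s - 1) / (p / 2 - 1 / 2)) ((p / s - 1) / (1 / 2)))) < r)
    (l : ℝ → ℝ) (hlmeas : Measurable l) (hlpos : ∀ x, 0 ≤ x → 0 < l x)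
    (hlslow : ∀ c : ℝ, 0 < c → Tendsto (fun x => l (c * x) / l x) atTop (nhds 1))
    (hmom : Integrable (fun ω => Z ω ^ min 2 p) μ) :
    Summable (fun n : ℕ =>
      ((n + 1 : ℝ) ^ (r / 2 + p / s - 2 - 1 / s)) * l (n + 1) *
        ∫ x in Set.Ioi ((n + 1 : ℝ) ^ (1 / s)),
          x ^ (-r) * (∫ ω, (min (Z ω) x) ^ 2 ∂μ) ^ (r / 2)) :=
  second_moment_rosenthal_term_bound_general μ Z hZnonneg s p r hs1 hs2 hsp hp1 hr l hlmeas hlpos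
    hlslow hmom
end

section
/- Let $1\le s<2$, $p>s$ with $p>1$, let $l$ be slowly varying at infinity, and let $r>\max\Big\{2,\,p,\,\frac{p/s-1}{1/s-1/2},\,\frac{p/s-1}{p/2-1/2},\,\frac{p/s-1}{1/2}\Big\}$. Let $Y$ be a real random variable on a probability space with $\mathbb{E}\big[|Y|^{p}\big]<\infty$. Then $\sum_{n=1}^{\infty}n^{r+p/s-2-1/s}\,l(n)\int_{n^{1/s}}^{\infty}x^{-r}\,\big(\mathbb{E}\big[|Y|\,\mathbf{1}\{|Y|>x\}\big]\big)^{r}\,dx<\infty$. -/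
/-! The slowly varying factor costs only an arbitrarily small power: for `h t = log l (eᵗ)` the
differences `h (t + u) - h t` tend to `0` for each `u`, and for measurable `h` this convergence is
uniform in `u ∈ [0, 1]` (Egorov's theorem on `[0, 2]` leaves a set of measure `> 3/2`, which meets
each of its translates by `u ≤ 1`), so `h` grows at most like `δ t` and `l x = O(x ^ δ)`.
By Markov's inequality `E[|Y| 1{|Y| > x}] ≤ E|Y|ᵖ x^{1-p}`, so the inner integral is
`O(n ^ ((1 - p r) / s))`, and the `n`-th term is `O(n ^ (-1 - (r - 1) (p / s - 1) + δ))`. -/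

open MeasureTheory Filter Set Topology

theorem exists_mem_and_add_mem_of_lt_volume_add_volume {E : Set ℝ} {a b u : ℝ}
    (hE : MeasurableSet E) (hsub : E ⊆ Icc a b) (hu : 0 ≤ u)
    (hvol : ENNReal.ofReal (b - a + u) < volume E + volume E) :
    ∃ w ∈ E, w + u ∈ E := by
  set E' := (· + u) ⁻¹' E
  have hE' : MeasurableSet E' := hE.preimage (measurable_add_const u)
  have hunion : E ∪ E' ⊆ Icc (a - u) b := by
    rintro x (hx | hx)
    · exact ⟨by linarith [(hsub hx).1], (hsub hx).2⟩
    · exact ⟨by linarith [(hsub hx).1], by linarith [(hsub hx).2]⟩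
  have hinter : volume (E ∩ E') ≠ 0 := by
    intro h0
    have hsplit := measure_union_add_inter (μ := volume) E hE'
    rw [h0, add_zero, measure_preimage_add_right] at hsplit
    have := measure_mono (μ := volume) hunion
    rw [hsplit, Real.volume_Icc, show b - (a - u) = b - a + u by ring] at this
    exact this.not_gt hvol
  obtain ⟨w, hwE, hwE'⟩ := nonempty_of_measure_ne_zero hinter
  exact ⟨w, hwE, hwE'⟩

theorem tendsto_add_sub_of_tendsto_atTop {h : ℝ → ℝ} (hm : Measurable h)
    (hconv : ∀ u, Tendsto (fun t => h (t + u) - h t) atTop (𝓝 0))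
    {t u : ℕ → ℝ} (ht : Tendsto t atTop atTop) (hu : ∀ k, u k ∈ Icc (0 : ℝ) 1) :
    Tendsto (fun k => h (t k + u k) - h (t k)) atTop (𝓝 0) := by
  have htu : Tendsto (fun k => t k + u k) atTop atTop :=
    tendsto_atTop_mono (fun k => le_add_of_nonneg_right (hu k).1) ht
  set Φ : ℕ → ℝ → ℝ × ℝ := fun k v => (h (t k + v) - h (t k), h (t k + u k + v) - h (t k + u k))
  have hΦm : ∀ k, StronglyMeasurable (Φ k) := fun k => by
    refine Measurable.stronglyMeasurable (Measurable.prodMk ?_ ?_) <;>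
      exact (hm.comp (measurable_const_add _)).sub_const _
  have hΦ : ∀ v, Tendsto (fun k => Φ k v) atTop (𝓝 0) := fun v =>
    ((hconv v).comp ht).prodMk_nhds ((hconv v).comp htu)
  obtain ⟨A, -, hAm, hA, hunif⟩ := tendstoUniformlyOn_of_ae_tendsto (μ := volume)
    (s := Icc 0 2) hΦm stronglyMeasurable_const measurableSet_Icc (by simp [Real.volume_Icc])
    (ae_of_all _ fun v _ => hΦ v) (by norm_num : (0 : ℝ) < 1 / 4)
  set E := Icc (0 : ℝ) 2 \ A
  have hE : ENNReal.ofReal (7 / 4) ≤ volume E := by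
    calc ENNReal.ofReal (7 / 4) = ENNReal.ofReal 2 - ENNReal.ofReal (1 / 4) := by
          rw [← ENNReal.ofReal_sub _ (by norm_num)]; norm_num
      _ ≤ volume (Icc (0 : ℝ) 2) - volume A := by
          rw [Real.volume_Icc, sub_zero]; exact tsub_le_tsub_left hA _
      _ ≤ volume E := le_measure_sdiff
  have hw : ∀ k, ∃ w ∈ E, w + u k ∈ E := fun k => by
    refine exists_mem_and_add_mem_of_lt_volume_add_volume
      (measurableSet_Icc.diff hAm) sdiff_subset (hu k).1 ?_
    calc ENNReal.ofReal (2 - 0 + u k) ≤ ENNReal.ofReal 3 :=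
          ENNReal.ofReal_le_ofReal (by linarith [(hu k).2])
      _ < ENNReal.ofReal (7 / 4) + ENNReal.ofReal (7 / 4) := by
          rw [← ENNReal.ofReal_add (by norm_num) (by norm_num)]
          exact (ENNReal.ofReal_lt_ofReal_iff (by norm_num)).2 (by norm_num)
      _ ≤ volume E + volume E := add_le_add hE hE
  choose w hwE hwuE using hw
  rw [Metric.tendsto_nhds]
  intro ε hε
  filter_upwards [Metric.tendstoUniformlyOn_iff.1 hunif (ε / 2) (half_pos hε)] with k hk
  have h₁ := (max_lt_iff.1 (hk _ (hwuE k))).1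
  have h₂ := (max_lt_iff.1 (hk _ (hwE k))).2
  simp only [Φ, Prod.fst_zero, Prod.snd_zero, Real.dist_eq, zero_sub, abs_neg] at h₁ h₂
  have hsplit : h (t k + u k) - h (t k) = (h (t k + (w k + u k)) - h (t k))
      - (h (t k + u k + w k) - h (t k + u k)) := by
    rw [show t k + (w k + u k) = t k + u k + w k by ring]; ring
  rw [Real.dist_eq, sub_zero, hsplit]
  exact (abs_sub _ _).trans_lt (by linarith)

theorem tendstoUniformlyOn_add_sub_of_measurable {h : ℝ → ℝ} (hm : Measurable h)
    (hconv : ∀ u, Tendsto (fun t => h (t + u) - h t) atTop (𝓝 0)) :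
    TendstoUniformlyOn (fun t u => h (t + u) - h t) 0 atTop (Icc 0 1) := by
  rw [Metric.tendstoUniformlyOn_iff]
  intro ε hε
  by_contra hfails
  rw [not_eventually, frequently_atTop] at hfails
  choose t ht hbad using fun k : ℕ => hfails k
  push Not at hbad
  choose u hu hbig using hbad
  obtain ⟨k, hk⟩ := (Metric.tendsto_atTop.1 (tendsto_add_sub_of_tendsto_atTop hm hconv
    (tendsto_atTop_mono ht tendsto_natCast_atTop_atTop) hu) ε hε)
  exact (hbig k).not_gt (by simpa [dist_comm] using hk k le_rfl)

theorem le_add_mul_of_forall_add_le {f : ℝ → ℝ} {T c : ℝ} (hc : 0 ≤ c)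
    (hstep : ∀ t ≥ T, ∀ u ∈ Icc (0 : ℝ) 1, f (t + u) ≤ f t + c) {t : ℝ} (ht : T ≤ t) :
    f t ≤ f T + c * (t - T + 1) := by
  have hint : ∀ n : ℕ, ∀ u ∈ Icc (0 : ℝ) 1, f (T + n + u) ≤ f T + c * (n + 1) := by
    intro n
    induction n with
    | zero => simpa using hstep T le_rfl
    | succ n ih =>
      intro u hu
      have hT : T ≤ T + n + 1 := by linarith [(n.cast_nonneg : (0 : ℝ) ≤ n)]
      have := hstep _ hT u hu
      have := ih 1 ⟨zero_le_one, le_rfl⟩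
      rw [Nat.cast_succ, ← add_assoc]
      linarith
  set n := ⌊t - T⌋₊
  have hn : (n : ℝ) ≤ t - T := Nat.floor_le (sub_nonneg.2 ht)
  have hn' : t - T < n + 1 := Nat.lt_floor_add_one _
  have := hint n (t - T - n) ⟨by linarith, by linarith⟩
  rw [show T + n + (t - T - n) = t by ring] at this
  linarith [mul_le_mul_of_nonneg_left hn hc]

theorem exists_eventually_le_mul_rpow_of_slowlyVarying {l : ℝ → ℝ} (hmeas : Measurable l)
    (hpos : ∀ x > 0, 0 < l x)
    (hslow : ∀ c > 0, Tendsto (fun x => l (c * x) / l x) atTop (𝓝 1)) {ε : ℝ} (hε : 0 < ε) :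
    ∃ C, ∀ᶠ x in atTop, l x ≤ C * x ^ ε := by
  set h : ℝ → ℝ := fun t => Real.log (l (Real.exp t))
  have hconv : ∀ u, Tendsto (fun t => h (t + u) - h t) atTop (𝓝 0) := by
    intro u
    have hlog := ((Real.continuousAt_log one_ne_zero).tendsto.comp
      ((hslow _ (Real.exp_pos u)).comp Real.tendsto_exp_atTop))
    rw [Real.log_one] at hlog
    refine hlog.congr fun t => ?_
    simp only [Function.comp_apply, h, Real.exp_add, mul_comm (Real.exp t)]
    exact Real.log_div (hpos _ (by positivity)).ne' (hpos _ (Real.exp_pos t)).ne'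
  obtain ⟨T, hT⟩ := eventually_atTop.1 <| Metric.tendstoUniformlyOn_iff.1
    (tendstoUniformlyOn_add_sub_of_measurable (h := h)
      (Real.measurable_log.comp (hmeas.comp Real.measurable_exp)) hconv) ε hε
  have hstep : ∀ t ≥ T, ∀ u ∈ Icc (0 : ℝ) 1, h (t + u) ≤ h t + ε := fun t ht u hu => by
    have := hT t ht u hu
    rw [Pi.zero_apply, Real.dist_eq, zero_sub, abs_neg] at this
    linarith [(abs_lt.1 this).2]
  refine ⟨Real.exp (h T - ε * T + ε), eventually_atTop.2 ⟨Real.exp T, fun x hTx => ?_⟩⟩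
  have hx : 0 < x := (Real.exp_pos T).trans_le hTx
  have hlx : l x = Real.exp (h (Real.log x)) := by
    simp only [h, Real.exp_log hx, Real.exp_log (hpos x hx)]
  have hgrowth := le_add_mul_of_forall_add_le hε.le hstep ((Real.le_log_iff_exp_le hx).2 hTx)
  calc l x = Real.exp (h (Real.log x)) := hlx
    _ ≤ Real.exp (h T - ε * T + ε + Real.log x * ε) :=
        Real.exp_le_exp.2 (by linarith)
    _ = Real.exp (h T - ε * T + ε) * x ^ ε := by rw [Real.exp_add, Real.rpow_def_of_pos hx]

theorem le_rpow_sub_mul_rpow {a x p : ℝ} (hx : 0 < x) (hxa : x ≤ a) (hp : 1 ≤ p) :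
    a ≤ x ^ (1 - p) * a ^ p := by
  have ha : 0 < a := hx.trans_le hxa
  calc a = x ^ (1 - p) * x ^ (p - 1) * a := by
        rw [← Real.rpow_add hx, show 1 - p + (p - 1) = 0 by ring, Real.rpow_zero, one_mul]
    _ ≤ x ^ (1 - p) * a ^ (p - 1) * a := by
        gcongr
    _ = x ^ (1 - p) * a ^ p := by
        rw [mul_assoc, ← Real.rpow_add_one ha.ne', sub_add_cancel]

theorem setIntegral_lt_abs_le_rpow_mul_integral {Ω : Type*} [MeasurableSpace Ω] {μ : Measure Ω}
    {Y : Ω → ℝ} (hY : Measurable Y) {p : ℝ} (hp : 1 ≤ p)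
    (hmom : Integrable (fun ω => |Y ω| ^ p) μ) {x : ℝ} (hx : 0 < x) :
    ∫ ω in {ω | x < |Y ω|}, |Y ω| ∂μ ≤ x ^ (1 - p) * ∫ ω, |Y ω| ^ p ∂μ := by
  have hS : MeasurableSet {ω | x < |Y ω|} := measurableSet_lt measurable_const hY.abs
  calc ∫ ω in {ω | x < |Y ω|}, |Y ω| ∂μ ≤ ∫ ω in {ω | x < |Y ω|}, x ^ (1 - p) * |Y ω| ^ p ∂μ :=
        integral_mono_of_nonneg (ae_of_all _ fun ω => abs_nonneg _)
          (hmom.integrableOn.const_mul _)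
          ((ae_restrict_iff' hS).2 (ae_of_all _ fun ω hω => le_rpow_sub_mul_rpow hx hω.le hp))
    _ = x ^ (1 - p) * ∫ ω in {ω | x < |Y ω|}, |Y ω| ^ p ∂μ := integral_const_mul _ _
    _ ≤ x ^ (1 - p) * ∫ ω, |Y ω| ^ p ∂μ := mul_le_mul_of_nonneg_left
        (setIntegral_le_integral hmom (ae_of_all _ fun ω => by positivity)) (by positivity)

theorem setIntegral_Ioi_rpow_neg_mul_rpow_le {T : ℝ → ℝ} {M p r A : ℝ} (hA : 0 < A)
    (hT0 : ∀ x, 0 ≤ T x) (hT : ∀ x ∈ Ioi A, T x ≤ M * x ^ (1 - p)) (hr : 0 ≤ r)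
    (hpr : 1 < p * r) :
    ∫ x in Ioi A, x ^ (-r) * T x ^ r ≤ M ^ r * (A ^ (1 - p * r) / (p * r - 1)) := by
  have hexp : -(p * r) < -1 := by linarith
  have hbound : ∀ x ∈ Ioi A, x ^ (-r) * T x ^ r ≤ M ^ r * x ^ (-(p * r)) := fun x hxA => by
    have hx : 0 < x := hA.trans hxA
    have hM : 0 ≤ M := nonneg_of_mul_nonneg_left ((hT0 x).trans (hT x hxA))
      (Real.rpow_pos_of_pos hx _)
    calc x ^ (-r) * T x ^ r ≤ x ^ (-r) * (M * x ^ (1 - p)) ^ r := by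
          gcongr
          · exact hT0 x
          · exact hT x hxA
      _ = M ^ r * x ^ (-(p * r)) := by
          rw [Real.mul_rpow hM (by positivity), ← Real.rpow_mul hx.le, mul_left_comm,
            ← Real.rpow_add hx, show -r + (1 - p) * r = -(p * r) by ring]
  calc ∫ x in Ioi A, x ^ (-r) * T x ^ r ≤ ∫ x in Ioi A, M ^ r * x ^ (-(p * r)) :=
        integral_mono_of_nonneg
          ((ae_restrict_iff' measurableSet_Ioi).2 (ae_of_all _ fun x hx =>
            mul_nonneg (Real.rpow_nonneg (hA.trans hx).le _) (Real.rpow_nonneg (hT0 x) _)))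
          ((integrableOn_Ioi_rpow_of_lt hexp hA).const_mul _)
          ((ae_restrict_iff' measurableSet_Ioi).2 (ae_of_all _ hbound))
    _ = M ^ r * (A ^ (1 - p * r) / (p * r - 1)) := by
        rw [integral_const_mul, integral_Ioi_rpow_of_lt hexp hA, neg_add_eq_sub, neg_div,
          ← div_neg, neg_sub]

theorem setIntegral_Ioi_rpow_neg_mul_truncatedMoment_le {Ω : Type*} [MeasurableSpace Ω]
    {μ : Measure Ω} {Y : Ω → ℝ} (hY : Measurable Y) {p r A : ℝ} (hp : 1 ≤ p)
    (hmom : Integrable (fun ω => |Y ω| ^ p) μ) (hr : 0 ≤ r) (hpr : 1 < p * r) (hA : 0 < A) :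
    ∫ x in Ioi A, x ^ (-r) * (∫ ω in {ω | x < |Y ω|}, |Y ω| ∂μ) ^ r ≤
      (∫ ω, |Y ω| ^ p ∂μ) ^ r * (A ^ (1 - p * r) / (p * r - 1)) :=
  setIntegral_Ioi_rpow_neg_mul_rpow_le hA (fun _ => integral_nonneg fun _ => abs_nonneg _)
    (fun _ hx => (setIntegral_lt_abs_le_rpow_mul_integral hY hp hmom
      (hA.trans hx)).trans_eq (mul_comm _ _)) hr hpr

theorem centering_term_series_bound_general
    {Ω : Type*} [MeasurableSpace Ω] (μ : Measure Ω)
    (Y : Ω → ℝ) (hYmeas : Measurable Y)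
    (s p r : ℝ) (hs1 : 1 ≤ s) (hsp : s < p)
    (hr : max (max 2 p)
        (max ((p / s - 1) / (1 / s - 1 / 2))
          (max ((p / s - 1) / (p / 2 - 1 / 2)) ((p / s - 1) / (1 / 2)))) < r)
    (l : ℝ → ℝ) (hlmeas : Measurable l) (hlpos : ∀ x, 0 ≤ x → 0 < l x)
    (hlslow : ∀ c : ℝ, 0 < c → Tendsto (fun x => l (c * x) / l x) atTop (nhds 1))
    (hmom : Integrable (fun ω => |Y ω| ^ p) μ) :
    Summable (fun n : ℕ =>
      ((n + 1 : ℝ) ^ (r + p / s - 2 - 1 / s)) * l (n + 1) *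
        ∫ x in Set.Ioi ((n + 1 : ℝ) ^ (1 / s)),
          x ^ (-r) * (∫ ω in {ω | x < |Y ω|}, |Y ω| ∂μ) ^ r) := by
  have hs : 0 < s := by linarith
  have hr1 : 1 < r := by linarith [(le_max_left 2 p).trans_lt ((le_max_left _ _).trans_lt hr)]
  have hpr : 1 < p * r := by nlinarith
  set M := ∫ ω, |Y ω| ^ p ∂μ
  -- without the factor `l n` the `n`-th term is `O(n ^ (-1 - 2δ))`, and `l n = O(n ^ δ)`
  set δ := (r - 1) * (p / s - 1) / 2
  have hδ : 0 < δ := half_pos (mul_pos (sub_pos.2 hr1) (sub_pos.2 ((one_lt_div hs).2 hsp)))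
  obtain ⟨C, hC⟩ := exists_eventually_le_mul_rpow_of_slowlyVarying hlmeas
    (fun x hx => hlpos x hx.le) hlslow hδ
  have hsum : Summable fun n : ℕ => C * (M ^ r / (p * r - 1)) * ((n : ℝ) + 1) ^ (-1 - δ) := by
    refine Summable.mul_left _ ?_
    exact ((summable_nat_add_iff 1).2 (Real.summable_nat_rpow.2 (by linarith : -1 - δ < -1))).congr
      fun n => by norm_num
  refine hsum.of_norm_bounded_eventually_nat ?_
  filter_upwards [(tendsto_atTop_add_const_right _ 1 tendsto_natCast_atTop_atTop).eventually hC]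
    with n hlC
  set m : ℝ := n + 1
  have hm : 0 < m := by positivity
  have hJ := setIntegral_Ioi_rpow_neg_mul_truncatedMoment_le hYmeas (by linarith) hmom
    (by linarith) hpr (Real.rpow_pos_of_pos hm (1 / s))
  have hJ0 : 0 ≤ ∫ x in Ioi (m ^ (1 / s)), x ^ (-r) * (∫ ω in {ω | x < |Y ω|}, |Y ω| ∂μ) ^ r :=
    setIntegral_nonneg measurableSet_Ioi fun x hx =>
      mul_nonneg (Real.rpow_nonneg ((Real.rpow_pos_of_pos hm _).trans hx).le _)
        (Real.rpow_nonneg (integral_nonneg fun ω => abs_nonneg _) _)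
  have hlm := hlpos m hm.le
  rw [Real.norm_of_nonneg (by positivity)]
  calc _ ≤ m ^ (r + p / s - 2 - 1 / s) * (C * m ^ δ) *
        (M ^ r * ((m ^ (1 / s)) ^ (1 - p * r) / (p * r - 1))) := by
        gcongr
        exact mul_nonneg (by positivity) (hlm.trans_le hlC).le
    _ = C * (M ^ r / (p * r - 1)) * m ^ (-1 - δ) := by
        have hexp : r + p / s - 2 - 1 / s + δ + 1 / s * (1 - p * r) = -1 - δ := by
          simp only [δ]; field_simp; ring
        rw [← Real.rpow_mul hm.le, ← hexp, Real.rpow_add hm, Real.rpow_add hm]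
        ring

/-- **Bound for the centering term I₂₃ in the proof of Theorem 3.1.**
If `1 ≤ s < 2`, `p > s`, `p > 1`, `l` is slowly varying at infinity,
`r > max{2, p, (p/s-1)/(1/s-1/2), (p/s-1)/(p/2-1/2), (p/s-1)/(1/2)}`, and `Y`
satisfies `E[|Y|^p] < ∞`, then
`∑ n^{r+p/s-2-1/s} l(n) ∫_{n^{1/s}}^∞ x^{-r} (E[|Y| 1{|Y| > x}])^r dx < ∞`. -/
theorem centering_term_series_bound
    {Ω : Type*} [MeasurableSpace Ω] (μ : Measure Ω) [IsProbabilityMeasure μ]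
    (Y : Ω → ℝ) (hYmeas : Measurable Y)
    (s p r : ℝ) (hs1 : 1 ≤ s) (hs2 : s < 2) (hsp : s < p) (hp1 : 1 < p)
    (hr : max (max 2 p)
        (max ((p / s - 1) / (1 / s - 1 / 2))
          (max ((p / s - 1) / (p / 2 - 1 / 2)) ((p / s - 1) / (1 / 2)))) < r)
    (l : ℝ → ℝ) (hlmeas : Measurable l) (hlpos : ∀ x, 0 ≤ x → 0 < l x)
    (hlslow : ∀ c : ℝ, 0 < c → Tendsto (fun x => l (c * x) / l x) atTop (nhds 1))
    (hmom : Integrable (fun ω => |Y ω| ^ p) μ) :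
    Summable (fun n : ℕ =>
      ((n + 1 : ℝ) ^ (r + p / s - 2 - 1 / s)) * l (n + 1) *
        ∫ x in Set.Ioi ((n + 1 : ℝ) ^ (1 / s)),
          x ^ (-r) * (∫ ω in {ω | x < |Y ω|}, |Y ω| ∂μ) ^ r) :=
  centering_term_series_bound_general μ Y hYmeas s p r hs1 hsp hr l hlmeas hlpos hlslow hmom
end
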